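/- arXiv:1603.01659 — 3 statements merged into one kernel-verified Lean document; each statement's English description precedes it below -/
import Mathlib

section
/- Let β > 0, ρ > 0, P > 0, b ∈ ℝ^n. The minimizer of f(v) = β‖v‖₂ + (ρ/2)‖v - b‖₂² subject to ‖v‖₂² ≤ P is: v* = 0 if ‖b‖₂ ≤ β/ρ; v* = ((ρ‖b‖₂ - β)/(ρ‖b‖₂))·b if β/ρ < ‖b‖₂ < β/ρ + √P; and v* = (√P/‖b‖₂)·b otherwise. -/
open scoped Classical

open Set Metric

/-!
Only the norm of `v` and its alignment with `b` matter: by the reverse triangle inequality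
`f v ≥ φ ‖v‖` with `φ r = β r + ρ/2 (r - ‖b‖)²`, with equality on the ray `{t • b | t ≥ 0}`.
So it suffices to minimise the convex quadratic `φ` over `[0, √P]`, whose minimiser is the
unconstrained one `‖b‖ - β/ρ` clamped to that interval; the three branches of `vstar` are the
three positions of the clamp.
-/

noncomputable def radialObjective (β ρ B r : ℝ) : ℝ := β * r + ρ / 2 * (r - B) ^ 2

/-- First-order optimality: `φ r - φ s = (r - s) φ'(s) + ρ/2 (r - s)²`. -/
theorem isMinOn_radialObjective_of_variational {β ρ B s : ℝ} {S : Set ℝ} (hρ : 0 ≤ ρ)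
    (hvar : ∀ r ∈ S, 0 ≤ (r - s) * (β + ρ * (s - B))) :
    IsMinOn (radialObjective β ρ B) S s := isMinOn_iff.2 fun r hr => by
  have := hvar r hr
  unfold radialObjective
  nlinarith [mul_nonneg hρ (sq_nonneg (r - s))]

theorem isMinOn_radialObjective_zero {β ρ B : ℝ} (hρ : 0 ≤ ρ) (h : ρ * B ≤ β) :
    IsMinOn (radialObjective β ρ B) (Ici 0) 0 :=
  isMinOn_radialObjective_of_variational hρ fun r (hr : 0 ≤ r) => by nlinarith

theorem isMinOn_radialObjective_sub_div {β ρ B : ℝ} (hρ : 0 < ρ) :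
    IsMinOn (radialObjective β ρ B) univ (B - β / ρ) :=
  isMinOn_radialObjective_of_variational hρ.le fun r _ => by
    rw [sub_sub_cancel_left, mul_neg, mul_div_cancel₀ _ hρ.ne', add_neg_cancel, mul_zero]

theorem isMinOn_radialObjective_right {β ρ B R : ℝ} (hρ : 0 ≤ ρ) (h : β + ρ * R ≤ ρ * B) :
    IsMinOn (radialObjective β ρ B) (Iic R) R :=
  isMinOn_radialObjective_of_variational hρ fun r (hr : r ≤ R) => by nlinarith

theorem radialObjective_norm_le {E : Type*} [SeminormedAddCommGroup E] {β ρ : ℝ} (hρ : 0 ≤ ρ)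
    (b v : E) :
    radialObjective β ρ ‖b‖ ‖v‖ ≤ β * ‖v‖ + ρ / 2 * ‖v - b‖ ^ 2 := by
  have h : (‖v‖ - ‖b‖) ^ 2 ≤ ‖v - b‖ ^ 2 :=
    sq_le_sq' (abs_le.1 (abs_norm_sub_norm_le v b)).1 (abs_le.1 (abs_norm_sub_norm_le v b)).2
  unfold radialObjective
  gcongr

section Ray

variable {E : Type*} [SeminormedAddCommGroup E] [NormedSpace ℝ E]

theorem radialObjective_norm_smul {β ρ t : ℝ} (ht : 0 ≤ t) (b : E) :
    β * ‖t • b‖ + ρ / 2 * ‖t • b - b‖ ^ 2 = radialObjective β ρ ‖b‖ (t * ‖b‖) := by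
  have h : t • b - b = (t - 1) • b := by rw [sub_smul, one_smul]
  rw [h, norm_smul, norm_smul, Real.norm_of_nonneg ht, mul_pow, Real.norm_eq_abs, sq_abs,
    radialObjective]
  ring

theorem isMinOn_closedBall_smul {β ρ R t : ℝ} (hρ : 0 ≤ ρ) (ht : 0 ≤ t) {b : E}
    (hmin : IsMinOn (radialObjective β ρ ‖b‖) (Icc 0 R) (t * ‖b‖)) :
    IsMinOn (fun v => β * ‖v‖ + ρ / 2 * ‖v - b‖ ^ 2) (closedBall 0 R) (t • b) :=
  isMinOn_iff.2 fun v hv => by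
    rw [radialObjective_norm_smul ht]
    exact (hmin ⟨norm_nonneg v, mem_closedBall_zero_iff.1 hv⟩).trans
      (radialObjective_norm_le hρ b v)

end Ray

theorem constrained_group_soft_thresholding_general (n : ℕ)
    (β ρ P : ℝ) (hβ : 0 < β) (hρ : 0 < ρ) (hP : 0 < P)
    (b : EuclideanSpace ℝ (Fin n))
    (f : EuclideanSpace ℝ (Fin n) → ℝ)
    (hf : ∀ v, f v = β * ‖v‖ + (ρ / 2) * ‖v - b‖ ^ 2)
    (vstar : EuclideanSpace ℝ (Fin n))
    (hvstar : vstar =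
      if ‖b‖ ≤ β / ρ then 0
      else if ‖b‖ < β / ρ + Real.sqrt P then ((ρ * ‖b‖ - β) / (ρ * ‖b‖)) • b
      else (Real.sqrt P / ‖b‖) • b) :
    ‖vstar‖ ^ 2 ≤ P ∧
      ∀ v : EuclideanSpace ℝ (Fin n), ‖v‖ ^ 2 ≤ P → f vstar ≤ f v := by
  obtain rfl : f = fun v => β * ‖v‖ + ρ / 2 * ‖v - b‖ ^ 2 := funext hf
  suffices ∃ t, 0 ≤ t ∧ vstar = t • b ∧ t * ‖b‖ ≤ √P ∧
      IsMinOn (radialObjective β ρ ‖b‖) (Icc 0 √P) (t * ‖b‖) by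
    obtain ⟨t, ht, rfl, hs, hmin⟩ := this
    refine ⟨?_, fun v hv => isMinOn_closedBall_smul hρ.le ht hmin ?_⟩
    · rwa [norm_smul, Real.norm_of_nonneg ht, ← Real.le_sqrt (by positivity) hP.le]
    · exact mem_closedBall_zero_iff.2 (Real.le_sqrt_of_sq_le hv)
  split_ifs at hvstar with h₁ h₂
  · refine ⟨0, le_rfl, by rw [hvstar, zero_smul], by simp, ?_⟩
    rw [zero_mul]
    refine (isMinOn_radialObjective_zero hρ.le ?_).on_subset Icc_subset_Ici_self
    rwa [le_div_iff₀ hρ, mul_comm] at h₁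
  · have hb : 0 < ‖b‖ := (div_pos hβ hρ).trans (not_le.1 h₁)
    have hs : (ρ * ‖b‖ - β) / (ρ * ‖b‖) * ‖b‖ = ‖b‖ - β / ρ := by field_simp
    refine ⟨_, div_nonneg ?_ (by positivity), hvstar, ?_, ?_⟩
    · nlinarith [(div_lt_iff₀ hρ).1 (not_le.1 h₁)]
    · rw [hs]; linarith
    · rw [hs]; exact isMinOn_radialObjective_sub_div hρ |>.on_subset (subset_univ _)
  · have hb : 0 < ‖b‖ := (div_pos hβ hρ).trans (not_le.1 h₁)
    have hs : √P / ‖b‖ * ‖b‖ = √P := div_mul_cancel₀ _ hb.ne'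
    refine ⟨_, by positivity, hvstar, hs.le, ?_⟩
    rw [hs]
    refine (isMinOn_radialObjective_right hρ.le ?_).on_subset Icc_subset_Iic_self
    have := mul_le_mul_of_nonneg_left (not_lt.1 h₂) hρ.le
    rw [mul_add, mul_div_cancel₀ _ hρ.ne'] at this
    linarith

theorem constrained_group_soft_thresholding (n : ℕ) (hn : 1 ≤ n)
    (β ρ P : ℝ) (hβ : 0 < β) (hρ : 0 < ρ) (hP : 0 < P)
    (b : EuclideanSpace ℝ (Fin n))
    (f : EuclideanSpace ℝ (Fin n) → ℝ)
    (hf : ∀ v, f v = β * ‖v‖ + (ρ / 2) * ‖v - b‖ ^ 2)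
    (vstar : EuclideanSpace ℝ (Fin n))
    (hvstar : vstar =
      if ‖b‖ ≤ β / ρ then 0
      else if ‖b‖ < β / ρ + Real.sqrt P then ((ρ * ‖b‖ - β) / (ρ * ‖b‖)) • b
      else (Real.sqrt P / ‖b‖) • b) :
    ‖vstar‖ ^ 2 ≤ P ∧
      ∀ v : EuclideanSpace ℝ (Fin n), ‖v‖ ^ 2 ≤ P → f vstar ≤ f v :=
  constrained_group_soft_thresholding_general n β ρ P hβ hρ hP b f hf vstar hvstar
end

section
/- For nonnegative sequences Q_i, A_i, μ_i (i = 1..I) with queue dynamics Q_i(t+1) = max(Q_i(t) − μ_i(t), 0) + A_i(t), the Lyapunov drift satisfies Δ(Q(t)) ≤ B − ∑_{i=1}^I Q_i(t)·E[μ_i(t) − A_i(t) | Q(t)], where B ≥ (1/2)∑_{i=1}^I E[A_i(t)² + μ_i(t)² | Q(t)]. -/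
open MeasureTheory Finset

/-! Pointwise, `0 ≤ max (q - m) 0 ≤ q` and `max (q - m) 0 ^ 2 ≤ (q - m) ^ 2` when `q, m ≥ 0`, so one
step of the queue gives `Q(t+1)² ≤ Q² + μ² + A² - 2 Q (μ - A)` for `A ≥ 0`. Summing over the queues and
integrating (monotonicity and linearity of the integral) yields the drift bound. -/

theorem half_sq_queue_step_sub_half_sq_le {q m a : ℝ} (hq : 0 ≤ q) (hm : 0 ≤ m) (ha : 0 ≤ a) :
    (1 / 2) * (max (q - m) 0 + a) ^ 2 - (1 / 2) * q ^ 2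
      ≤ (1 / 2) * (a ^ 2 + m ^ 2) - q * (m - a) := by
  have h_le : max (q - m) 0 ≤ q := max_le (by linarith) hq
  have h_sq : max (q - m) 0 ^ 2 ≤ (q - m) ^ 2 := by
    rcases max_cases (q - m) 0 with ⟨h, _⟩ | ⟨h, _⟩
    · rw [h]
    · rw [h, zero_pow two_ne_zero]
      positivity
  nlinarith [mul_le_mul_of_nonneg_right h_le ha]

theorem half_sum_sq_queue_step_sub_half_sum_sq_le {ι : Type*} [Fintype ι] {q m a : ι → ℝ}
    (hq : ∀ i, 0 ≤ q i) (hm : ∀ i, 0 ≤ m i) (ha : ∀ i, 0 ≤ a i) :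
    (1 / 2) * ∑ i, (max (q i - m i) 0 + a i) ^ 2 - (1 / 2) * ∑ i, q i ^ 2
      ≤ ∑ i, ((1 / 2) * (a i ^ 2 + m i ^ 2) - q i * (m i - a i)) := by
  rw [mul_sum, mul_sum, ← sum_sub_distrib]
  exact sum_le_sum fun i _ => half_sq_queue_step_sub_half_sq_le (hq i) (hm i) (ha i)

theorem lyapunov_drift_bound_general {Ω : Type*} [MeasurableSpace Ω]
    (P : Measure Ω)
    (I : ℕ) (Q A μ : ℕ → Ω → Fin I → ℝ) (t : ℕ)
    (hQnn : ∀ t ω i, 0 ≤ Q t ω i)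
    (hAnn : ∀ t ω i, 0 ≤ A t ω i)
    (hμnn : ∀ t ω i, 0 ≤ μ t ω i)
    (hdyn : ∀ t ω i, Q (t + 1) ω i = max (Q t ω i - μ t ω i) 0 + A t ω i)
    (hLint : ∀ s, Integrable (fun ω => (1 / 2) * ∑ i, (Q s ω i) ^ 2) P)
    (hsqint : ∀ i : Fin I, Integrable (fun ω => (A t ω i) ^ 2 + (μ t ω i) ^ 2) P)
    (hcrossint : ∀ i : Fin I, Integrable (fun ω => Q t ω i * (μ t ω i - A t ω i)) P)
    (B : ℝ)
    (hB : (1 / 2) * ∑ i, ∫ ω, ((A t ω i) ^ 2 + (μ t ω i) ^ 2) ∂P ≤ B) :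
    (∫ ω, ((1 / 2) * ∑ i, (Q (t + 1) ω i) ^ 2 - (1 / 2) * ∑ i, (Q t ω i) ^ 2) ∂P)
      ≤ B - ∑ i, ∫ ω, Q t ω i * (μ t ω i - A t ω i) ∂P := by
  have h_drift : ∀ ω, (1 / 2) * ∑ i, (Q (t + 1) ω i) ^ 2 - (1 / 2) * ∑ i, (Q t ω i) ^ 2
      ≤ ∑ i, ((1 / 2) * ((A t ω i) ^ 2 + (μ t ω i) ^ 2) - Q t ω i * (μ t ω i - A t ω i)) :=
    fun ω => by
      simp only [hdyn]
      exact half_sum_sq_queue_step_sub_half_sum_sq_le (hQnn t ω) (hμnn t ω) (hAnn t ω)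
  have h_int : ∀ i, Integrable (fun ω =>
      (1 / 2) * ((A t ω i) ^ 2 + (μ t ω i) ^ 2) - Q t ω i * (μ t ω i - A t ω i)) P :=
    fun i => ((hsqint i).const_mul _).sub (hcrossint i)
  calc (∫ ω, ((1 / 2) * ∑ i, (Q (t + 1) ω i) ^ 2 - (1 / 2) * ∑ i, (Q t ω i) ^ 2) ∂P)
      ≤ ∫ ω, ∑ i, ((1 / 2) * ((A t ω i) ^ 2 + (μ t ω i) ^ 2)
          - Q t ω i * (μ t ω i - A t ω i)) ∂P :=
        integral_mono ((hLint (t + 1)).sub (hLint t))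
          (integrable_finsetSum _ fun i _ => h_int i) h_drift
    _ = (1 / 2) * ∑ i, ∫ ω, ((A t ω i) ^ 2 + (μ t ω i) ^ 2) ∂P
          - ∑ i, ∫ ω, Q t ω i * (μ t ω i - A t ω i) ∂P := by
        rw [integral_finsetSum _ fun i _ => h_int i, mul_sum, ← sum_sub_distrib]
        refine sum_congr rfl fun i _ => ?_
        rw [integral_sub ((hsqint i).const_mul _) (hcrossint i), integral_const_mul]
    _ ≤ B - ∑ i, ∫ ω, Q t ω i * (μ t ω i - A t ω i) ∂P := sub_le_sub_right hB _

theorem lyapunov_drift_bound {Ω : Type*} [MeasurableSpace Ω]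
    (P : Measure Ω) [IsProbabilityMeasure P]
    (I : ℕ) (Q A μ : ℕ → Ω → Fin I → ℝ) (t : ℕ)
    (hQnn : ∀ t ω i, 0 ≤ Q t ω i)
    (hAnn : ∀ t ω i, 0 ≤ A t ω i)
    (hμnn : ∀ t ω i, 0 ≤ μ t ω i)
    (hdyn : ∀ t ω i, Q (t + 1) ω i = max (Q t ω i - μ t ω i) 0 + A t ω i)
    (hLint : ∀ s, Integrable (fun ω => (1 / 2) * ∑ i, (Q s ω i) ^ 2) P)
    (hsqint : ∀ i : Fin I, Integrable (fun ω => (A t ω i) ^ 2 + (μ t ω i) ^ 2) P)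
    (hcrossint : ∀ i : Fin I, Integrable (fun ω => Q t ω i * (μ t ω i - A t ω i)) P)
    (B : ℝ)
    (hB : (1 / 2) * ∑ i, ∫ ω, ((A t ω i) ^ 2 + (μ t ω i) ^ 2) ∂P ≤ B) :
    (∫ ω, ((1 / 2) * ∑ i, (Q (t + 1) ω i) ^ 2 - (1 / 2) * ∑ i, (Q t ω i) ^ 2) ∂P)
      ≤ B - ∑ i, ∫ ω, Q t ω i * (μ t ω i - A t ω i) ∂P :=
  lyapunov_drift_bound_general P I Q A μ t hQnn hAnn hμnn hdyn hLint hsqint hcrossint B hB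
end

section
/- Let R be Hermitian positive definite and h ∈ ℂ^N with e = 1 − h^H (R + h h^H)^{-1} h > 0. Then min_{α>0, u} [α(u^H(R + hh^H)u − 2Re(u^H h) + 1) − log α] = 1 + log e = 1 − log(1 + h^H R^{-1} h), establishing the equivalence between the rate log(1 + h^H R^{-1} h) and the optimized weighted MSE up to constants. -/
/-!
Completing the square with `Rtot *ᵥ u₀ = h` gives `mse u = (u - u₀)ᴴ Rtot (u - u₀) + e`,
so the MSE is minimised at the MMSE receiver `u₀ = Rtot⁻¹ h` with value `e`. For fixed MSE `m > 0`,
`log x ≤ x - 1` at `x = α m` shows that `α m - log α` is minimised at `α = m⁻¹` with value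
`1 + log m`. Finally `(1 + hᴴR⁻¹h) • Rtot⁻¹ h = R⁻¹ h` (Sherman–Morrison) gives
`e = (1 + hᴴR⁻¹h)⁻¹`, which is also why `e > 0`.
-/

open Matrix ComplexOrder

open RCLike Real Set

namespace Matrix

variable {n : Type*} [Fintype n]

theorem IsHermitian.dotProduct_mulVec_sub {α : Type*} [CommRing α] [StarRing α]
    {A : Matrix n n α} (hA : A.IsHermitian) {x b : n → α} (hx : A *ᵥ x = b) (u : n → α) :
    star (u - x) ⬝ᵥ (A *ᵥ (u - x)) =
      star u ⬝ᵥ (A *ᵥ u) - star u ⬝ᵥ b - star b ⬝ᵥ u + star b ⬝ᵥ x := by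
  have hstar : ∀ y, star x ⬝ᵥ (A *ᵥ y) = star b ⬝ᵥ y := fun y => by
    rw [dotProduct_mulVec, ← hx, star_mulVec, hA.eq]
  rw [star_sub, mulVec_sub, sub_dotProduct, dotProduct_sub, dotProduct_sub, hstar, hstar, hx]
  ring

variable [DecidableEq n]

theorem smul_inv_add_vecMulVec_mulVec {α : Type*} [CommRing α] {A : Matrix n n α}
    (hA : IsUnit A.det) (v w : n → α) (hAvw : IsUnit (A + vecMulVec v w).det) :
    (1 + w ⬝ᵥ (A⁻¹ *ᵥ v)) • ((A + vecMulVec v w)⁻¹ *ᵥ v) = A⁻¹ *ᵥ v := by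
  have hAinv : A *ᵥ (A⁻¹ *ᵥ v) = v := by
    rw [mulVec_mulVec, mul_nonsing_inv _ hA, one_mulVec]
  have hmul : (A + vecMulVec v w) *ᵥ (A⁻¹ *ᵥ v) = (1 + w ⬝ᵥ (A⁻¹ *ᵥ v)) • v := by
    rw [add_mulVec, hAinv, vecMulVec_mulVec, op_smul_eq_smul, add_smul, one_smul]
  rw [← mulVec_smul, ← hmul, mulVec_mulVec, nonsing_inv_mul _ hAvw, one_mulVec]

variable {𝕜 : Type*} [RCLike 𝕜]

omit [DecidableEq n] in
theorem PosDef.add_vecMulVec_star {A : Matrix n n 𝕜} (hA : A.PosDef) (v : n → 𝕜) :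
    (A + vecMulVec v (star v)).PosDef :=
  hA.add_posSemidef (posSemidef_vecMulVec_self_star v)

theorem PosDef.one_sub_re_dotProduct_inv_add_vecMulVec_star {A : Matrix n n 𝕜} (hA : A.PosDef)
    (v : n → 𝕜) :
    1 - re (star v ⬝ᵥ ((A + vecMulVec v (star v))⁻¹ *ᵥ v)) =
      (1 + re (star v ⬝ᵥ (A⁻¹ *ᵥ v)))⁻¹ := by
  obtain ⟨r, hr, hs⟩ :=
    RCLike.nonneg_iff_exists_ofReal.mp (hA.inv.posSemidef.dotProduct_mulVec_nonneg v)
  have hst := congrArg (star v ⬝ᵥ ·) <| smul_inv_add_vecMulVec_mulVec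
    ((isUnit_iff_isUnit_det _).mp hA.isUnit) v (star v)
    ((isUnit_iff_isUnit_det _).mp (hA.add_vecMulVec_star v).isUnit)
  simp only [dotProduct_smul, smul_eq_mul, ← hs] at hst
  have hr1 : (1 + r : 𝕜) ≠ 0 := by exact_mod_cast (by positivity : (1 + r : ℝ) ≠ 0)
  have ht :
      star v ⬝ᵥ ((A + vecMulVec v (star v))⁻¹ *ᵥ v) = ((r / (1 + r) : ℝ) : 𝕜) := by
    push_cast
    exact eq_div_of_mul_eq hr1 (by rw [mul_comm]; exact hst)
  rw [ht, ← hs, ofReal_re, ofReal_re]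
  field_simp
  ring

end Matrix

variable {n 𝕜 : Type*} [Fintype n] [RCLike 𝕜]

/-- `E |uᴴ y - s|²` for `y = h s + noise` with unit-power symbol `s` and `A = E[y yᴴ]`. -/
noncomputable def mse (A : Matrix n n 𝕜) (h u : n → 𝕜) : ℝ :=
  re (star u ⬝ᵥ (A *ᵥ u)) - 2 * re (star u ⬝ᵥ h) + 1

theorem mse_eq_of_mulVec_eq {A : Matrix n n 𝕜} (hA : A.IsHermitian) {x h : n → 𝕜}
    (hx : A *ᵥ x = h) (u : n → 𝕜) :
    mse A h u = re (star (u - x) ⬝ᵥ (A *ᵥ (u - x))) + (1 - re (star h ⬝ᵥ x)) := by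
  have hconj : re (star h ⬝ᵥ u) = re (star u ⬝ᵥ h) := by
    rw [star_dotProduct, star_def, conj_re]
  rw [mse, hA.dotProduct_mulVec_sub hx, map_add, map_sub, map_sub, hconj]
  ring

theorem isLeast_range_mse [DecidableEq n] {A : Matrix n n 𝕜} (hA : A.PosDef) (h : n → 𝕜) :
    IsLeast (range (mse A h)) (1 - re (star h ⬝ᵥ (A⁻¹ *ᵥ h))) := by
  have hx : A *ᵥ (A⁻¹ *ᵥ h) = h := by
    rw [mulVec_mulVec, mul_nonsing_inv _ ((isUnit_iff_isUnit_det _).mp hA.isUnit), one_mulVec]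
  refine ⟨⟨A⁻¹ *ᵥ h, ?_⟩, ?_⟩
  · simp [mse_eq_of_mulVec_eq hA.isHermitian hx]
  · rintro _ ⟨u, rfl⟩
    rw [mse_eq_of_mulVec_eq hA.isHermitian hx]
    linarith [hA.posSemidef.re_dotProduct_nonneg (u - A⁻¹ *ᵥ h)]

theorem one_add_log_le_mul_sub_log {a c : ℝ} (ha : 0 < a) (hc : 0 < c) :
    1 + log c ≤ a * c - log a := by
  have := log_le_sub_one_of_pos (mul_pos ha hc)
  rw [log_mul ha.ne' hc.ne'] at this
  linarith

theorem isLeast_mul_sub_log_of_isLeast_range {ι : Type*} {f : ι → ℝ} {m : ℝ}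
    (hf : IsLeast (range f) m) (hm : 0 < m) :
    IsLeast {v | ∃ (a : ℝ) (i : ι), 0 < a ∧ v = a * f i - log a} (1 + log m) := by
  obtain ⟨⟨i, hi⟩, hle⟩ := hf
  refine ⟨⟨m⁻¹, i, inv_pos.mpr hm, ?_⟩, ?_⟩
  · rw [hi, inv_mul_cancel₀ hm.ne', log_inv]
    ring
  · rintro _ ⟨a, j, ha, rfl⟩
    calc 1 + log m ≤ a * m - log a := one_add_log_le_mul_sub_log ha hm
      _ ≤ a * f j - log a := by gcongr; exact hle ⟨j, rfl⟩

theorem rate_wmmse_equivalence_general (N : ℕ) (R : Matrix (Fin N) (Fin N) ℂ) (hR : R.PosDef)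
    (h : Fin N → ℂ)
    (Rtot : Matrix (Fin N) (Fin N) ℂ)
    (hRtot : Rtot = R + Matrix.vecMulVec h (star h))
    (e : ℝ) (he : e = 1 - (star h ⬝ᵥ (Rtot⁻¹ *ᵥ h)).re) :
    IsLeast { val : ℝ | ∃ (α : ℝ) (u : Fin N → ℂ), 0 < α ∧
        val = α * ((star u ⬝ᵥ (Rtot *ᵥ u)).re - 2 * (star u ⬝ᵥ h).re + 1) - Real.log α }
      (1 + Real.log e) ∧
    1 + Real.log e = 1 - Real.log (1 + (star h ⬝ᵥ (R⁻¹ *ᵥ h)).re) := by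
  subst hRtot
  have he_inv : e = (1 + (star h ⬝ᵥ (R⁻¹ *ᵥ h)).re)⁻¹ :=
    he.trans (hR.one_sub_re_dotProduct_inv_add_vecMulVec_star h)
  have hs : 0 ≤ (star h ⬝ᵥ (R⁻¹ *ᵥ h)).re := hR.inv.posSemidef.re_dotProduct_nonneg h
  have hepos : 0 < e := he_inv ▸ inv_pos.mpr (by linarith)
  have hmse := he ▸ isLeast_range_mse (hR.add_vecMulVec_star h) h
  exact ⟨isLeast_mul_sub_log_of_isLeast_range hmse hepos, by rw [he_inv, log_inv, sub_eq_add_neg]⟩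

theorem rate_wmmse_equivalence (N : ℕ) (R : Matrix (Fin N) (Fin N) ℂ) (hR : R.PosDef)
    (h : Fin N → ℂ)
    (Rtot : Matrix (Fin N) (Fin N) ℂ)
    (hRtot : Rtot = R + Matrix.vecMulVec h (star h))
    (e : ℝ) (he : e = 1 - (star h ⬝ᵥ (Rtot⁻¹ *ᵥ h)).re) (hepos : 0 < e) :
    IsLeast { val : ℝ | ∃ (α : ℝ) (u : Fin N → ℂ), 0 < α ∧
        val = α * ((star u ⬝ᵥ (Rtot *ᵥ u)).re - 2 * (star u ⬝ᵥ h).re + 1) - Real.log α }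
      (1 + Real.log e) ∧
    1 + Real.log e = 1 - Real.log (1 + (star h ⬝ᵥ (R⁻¹ *ᵥ h)).re) :=
  rate_wmmse_equivalence_general N R hR h Rtot hRtot e he
end
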